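/- Let n be an odd integer with n ≥ 5, and let m be an integer with m ≥ (5n−1)/2 and m ≥ 2n + 2. Then both permutations (3, n)(2n−1, 2n+1) and (2, n+1)(2n, 2n+2) — each a product of two disjoint transpositions — belong to the subgroup C(n, m) of S_m generated by the n-crossing permutations. -/

import Mathlib

/-- The underlying function of the `n`-crossing permutation `π_j` over `{1, …, m}` (as a
function on `ℕ`): it sends `j + k` to `j + n - 1 - k` for `0 ≤ k ≤ n - 1` and fixes all
other points. -/
def crossFun (n j i : ℕ) : ℕ :=
  if j ≤ i ∧ i < j + n then 2 * j + n - 1 - i else i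

lemma crossFun_involutive (n j : ℕ) : Function.Involutive (crossFun n j) := by
  intro i
  unfold crossFun
  split_ifs <;> omega

/-- The `n`-crossing permutation `π_j`, viewed as a permutation of `ℕ` fixing every point
outside `{j, …, j + n - 1}`. -/
def crossPerm (n j : ℕ) : Equiv.Perm ℕ :=
  Function.Involutive.toPerm _ (crossFun_involutive n j)

/-- `C n m` is the subgroup of the symmetric group `S_m` (realized as permutations of `ℕ`
supported on `{1, …, m}`) generated by the `n`-crossing permutations `π_1, …, π_{m-n+1}`. -/
def C (n m : ℕ) : Subgroup (Equiv.Perm ℕ) :=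
  Subgroup.closure {σ | ∃ j, 1 ≤ j ∧ j ≤ m - n + 1 ∧ σ = crossPerm n j}


/-!
Conjugating `π_{j+1}` by `π_j` (or, mirrored, `π_j` by `π_{j+1}`) gives the reversal of the
`n - 2` points `j, …, j + n - 3` times the transposition `(j + n - 2, j + n)`; composing this
shorter reversal with the concentric `n`-reversal `π_{j-1}` leaves only the transposition of its
two endpoints. Conjugating by further crossings (involutions that commute with the reversal part)
then moves the transpositions to the required places: for the first product the last conjugation
is by the crossing centred at `n + 1`, which exists because `n` is odd.
-/

open Equiv

section CrossPerm

variable {n j i i' : ℕ}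

lemma crossPerm_apply (n j i : ℕ) :
    crossPerm n j i = if j ≤ i ∧ i < j + n then 2 * j + n - 1 - i else i := rfl

lemma crossPerm_apply_of_lt (h : i < j) : crossPerm n j i = i := if_neg (by omega)

lemma crossPerm_apply_of_add_le (h : j + n ≤ i) : crossPerm n j i = i := if_neg (by omega)

lemma crossPerm_apply_of_add_eq (hi : j ≤ i) (hi' : j ≤ i') (h : i + i' + 1 = 2 * j + n) :
    crossPerm n j i = i' := by
  rw [crossPerm_apply, if_pos (by omega)]; omega

lemma crossPerm_mul_self (n j : ℕ) : crossPerm n j * crossPerm n j = 1 :=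
  Equiv.ext (crossFun_involutive n j)

lemma commute_crossPerm_of_add_le {k l j i : ℕ} (h : j + k ≤ i) :
    Commute (crossPerm k j) (crossPerm l i) := by
  refine Equiv.ext fun x => ?_
  simp only [Perm.mul_apply, crossPerm_apply]
  split_ifs <;> omega

lemma crossPerm_mul_crossPerm_succ_mul_crossPerm (hn : 2 ≤ n) :
    crossPerm n j * crossPerm n (j + 1) * crossPerm n j =
      crossPerm (n - 2) j * swap (j + n - 2) (j + n) := by
  ext x
  simp only [Perm.mul_apply, crossPerm_apply, swap_apply_def]
  split_ifs <;> omega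

lemma crossPerm_succ_mul_crossPerm_mul_crossPerm_succ (hn : 2 ≤ n) :
    crossPerm n (j + 1) * crossPerm n j * crossPerm n (j + 1) =
      crossPerm (n - 2) (j + 3) * swap j (j + 2) := by
  ext x
  simp only [Perm.mul_apply, crossPerm_apply, swap_apply_def]
  split_ifs <;> omega

lemma crossPerm_mul_crossPerm_sub_two (hn : 2 ≤ n) :
    crossPerm n j * crossPerm (n - 2) (j + 1) = swap j (j + n - 1) := by
  ext x
  simp only [Perm.mul_apply, crossPerm_apply, swap_apply_def]
  split_ifs <;> omega

lemma crossPerm_mem_C {m : ℕ} (hj : 1 ≤ j) (hjm : j + n ≤ m + 1) : crossPerm n j ∈ C n m :=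
  Subgroup.subset_closure ⟨j, hj, by omega, rfl⟩

end CrossPerm

section Involution

variable {α : Type*} [DecidableEq α] {σ ρ : Perm α} (hσ : σ * σ = 1) (a b c d : α)
include hσ

lemma mul_swap_mul_of_mul_self_eq_one : σ * swap a b * σ = swap (σ a) (σ b) := by
  rw [mul_swap_eq_swap_mul, mul_assoc, hσ, mul_one]

lemma mul_mul_swap_mul_of_mul_self_eq_one (hρ : Commute σ ρ) :
    σ * (ρ * swap a b) * σ = ρ * swap (σ a) (σ b) := by
  rw [← mul_assoc, hρ.eq, mul_assoc ρ, mul_assoc ρ, mul_swap_mul_of_mul_self_eq_one hσ]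

lemma mul_swap_mul_swap_mul_of_mul_self_eq_one :
    σ * (swap a b * swap c d) * σ = swap (σ a) (σ b) * swap (σ c) (σ d) := by
  rw [← mul_swap_mul_of_mul_self_eq_one hσ, ← mul_swap_mul_of_mul_self_eq_one hσ]
  simp only [mul_assoc, hσ, ← mul_assoc σ σ, one_mul]

end Involution

section Words

variable {n : ℕ}

lemma swap_three_mul_swap_eq_crossPerm_word (hn : 5 ≤ n) {j : ℕ} (hj : 2 * j = n + 3) :
    swap 3 n * swap (2 * n - 1) (2 * n + 1) =
      crossPerm n j * crossPerm n 3 * crossPerm n (n + 2) * crossPerm n 4 *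
        crossPerm n 5 * crossPerm n 4 * crossPerm n (n + 2) * crossPerm n j := by
  set ρ := crossPerm (n - 2) 4
  have hπ454 : crossPerm n 4 * crossPerm n 5 * crossPerm n 4 = ρ * swap (n + 2) (n + 4) := by
    rw [crossPerm_mul_crossPerm_succ_mul_crossPerm (by omega), show 4 + n - 2 = n + 2 by omega,
      add_comm 4 n]
  have hπn2 : crossPerm n (n + 2) * (ρ * swap (n + 2) (n + 4)) * crossPerm n (n + 2) =
      ρ * swap (2 * n + 1) (2 * n - 1) := by
    rw [mul_mul_swap_mul_of_mul_self_eq_one (crossPerm_mul_self _ _) _ _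
      (commute_crossPerm_of_add_le (by omega)).symm,
      crossPerm_apply_of_add_eq (i' := 2 * n + 1) le_rfl (by omega) (by omega),
      crossPerm_apply_of_add_eq (i' := 2 * n - 1) (by omega) (by omega) (by omega)]
  have hπ3 : crossPerm n 3 * ρ = swap 3 (n + 2) := by
    rw [crossPerm_mul_crossPerm_sub_two (by omega), show 3 + n - 1 = n + 2 by omega]
  calc swap 3 n * swap (2 * n - 1) (2 * n + 1)
      = swap 3 n * swap (2 * n + 1) (2 * n - 1) := by rw [swap_comm (2 * n - 1)]
    _ = crossPerm n j * (swap 3 (n + 2) * swap (2 * n + 1) (2 * n - 1)) * crossPerm n j := by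
      rw [mul_swap_mul_swap_mul_of_mul_self_eq_one (crossPerm_mul_self _ _),
        crossPerm_apply_of_lt (by omega),
        crossPerm_apply_of_add_eq (i' := n) (by omega) (by omega) (by omega),
        crossPerm_apply_of_add_le (by omega), crossPerm_apply_of_add_le (by omega)]
    _ = crossPerm n j * (crossPerm n 3 * (crossPerm n (n + 2) *
          (crossPerm n 4 * crossPerm n 5 * crossPerm n 4) * crossPerm n (n + 2))) *
            crossPerm n j := by
      rw [hπ454, hπn2, ← mul_assoc (crossPerm n 3), hπ3]
    _ = _ := by simp only [mul_assoc]

lemma swap_two_mul_swap_eq_crossPerm_word (hn : 2 ≤ n) :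
    swap 2 (n + 1) * swap (2 * n) (2 * n + 2) =
      crossPerm n (n + 2) * crossPerm n (n + 3) * crossPerm n (n + 2) * crossPerm n 1 *
        crossPerm n n * crossPerm n (n - 1) * crossPerm n n * crossPerm n 1 := by
  set ρ := crossPerm (n - 2) (n + 2)
  have hπn2 : crossPerm n (n + 2) * crossPerm n (n + 3) * crossPerm n (n + 2) =
      ρ * swap (2 * n) (2 * n + 2) := by
    rw [crossPerm_mul_crossPerm_succ_mul_crossPerm (by omega), show n + 2 + n - 2 = 2 * n by omega,
      show n + 2 + n = 2 * n + 2 by omega]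
  have hπn : crossPerm n n * crossPerm n (n - 1) * crossPerm n n = ρ * swap (n - 1) (n + 1) := by
    obtain ⟨k, rfl⟩ : ∃ k, n = k + 1 := ⟨n - 1, by omega⟩
    rw [Nat.add_sub_cancel, crossPerm_succ_mul_crossPerm_mul_crossPerm_succ (by omega)]
  have hπ1 : crossPerm n 1 * (ρ * swap (n - 1) (n + 1)) * crossPerm n 1 = ρ * swap 2 (n + 1) := by
    rw [mul_mul_swap_mul_of_mul_self_eq_one (crossPerm_mul_self _ _) _ _
      (commute_crossPerm_of_add_le (by omega)),
      crossPerm_apply_of_add_eq (i' := 2) (by omega) (by omega) (by omega),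
      crossPerm_apply_of_add_le (by omega)]
  have hρ : Commute ρ (swap (2 * n) (2 * n + 2)) := by
    rw [Commute, SemiconjBy, mul_swap_eq_swap_mul, crossPerm_apply_of_add_le (by omega),
      crossPerm_apply_of_add_le (by omega)]
  calc swap 2 (n + 1) * swap (2 * n) (2 * n + 2)
      = swap (2 * n) (2 * n + 2) * swap 2 (n + 1) :=
        (Perm.disjoint_swap_swap (by simp; omega)).commute.eq
    _ = ρ * swap (2 * n) (2 * n + 2) * (ρ * swap 2 (n + 1)) := by
      rw [hρ.eq, mul_assoc, ← mul_assoc ρ ρ, crossPerm_mul_self, one_mul]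
    _ = _ := by rw [← hπn2, ← hπ1, ← hπn]; simp only [mul_assoc]

end Words

theorem stmt8_general (n : ℕ) (hn : Odd n) (hn5 : 5 ≤ n)
    (m : ℕ) (hm2 : 2 * n + 2 ≤ m) :
    Equiv.swap 3 n * Equiv.swap (2 * n - 1) (2 * n + 1) ∈ C n m ∧
    Equiv.swap 2 (n + 1) * Equiv.swap (2 * n) (2 * n + 2) ∈ C n m := by
  have hmem : ∀ j, 1 ≤ j → j ≤ n + 3 → crossPerm n j ∈ C n m :=
    fun j hj hjn => crossPerm_mem_C hj (by omega)
  have hj : 2 * ((n + 3) / 2) = n + 3 := by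
    obtain ⟨t, rfl⟩ := hn
    omega
  rw [swap_three_mul_swap_eq_crossPerm_word hn5 hj, swap_two_mul_swap_eq_crossPerm_word (by omega)]
  constructor <;> repeat' apply mul_mem
  all_goals exact hmem _ (by omega) (by omega)

theorem stmt8 (n : ℕ) (hn : Odd n) (hn5 : 5 ≤ n)
    (m : ℕ) (hm1 : (5 * n - 1) / 2 ≤ m) (hm2 : 2 * n + 2 ≤ m) :
    Equiv.swap 3 n * Equiv.swap (2 * n - 1) (2 * n + 1) ∈ C n m ∧
    Equiv.swap 2 (n + 1) * Equiv.swap (2 * n) (2 * n + 2) ∈ C n m :=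
  stmt8_general n hn hn5 m hm2
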